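/- Let (W,S) be a Coxeter system, s ∈ S, and let odd(s) be the set of t ∈ S reachable from s by a path in the Coxeter diagram all of whose edge labels are odd. Suppose z is an element of the center of ⟨K_s⟩, where K_s is the union of all spherical irreducible components of eodd(s) := odd(s) ∪ {t ∈ S : o(tt') < ∞ for some t' ∈ odd(s)} not containing s. Then the map θ_{s,z}: S → W defined by θ_{s,z}(t) = tz for t ∈ odd(s) and θ_{s,z}(t) = t otherwise extends to an involutory automorphism of W. -/

import Mathlib

variable {B : Type*}

/-- The odd component `odd(s)`: the set of `t ∈ S` reachable from `s` by paths in the Coxeter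
diagram all of whose edge labels are odd. -/
def oddComponent (M : CoxeterMatrix B) (s : B) : Set B :=
  {t | Relation.ReflTransGen (fun a b => a ≠ b ∧ Odd (M a b)) s t}

/-- `eodd(s) = odd(s) ∪ {t ∈ S : o(t t') < ∞ for some t' ∈ odd(s)}` (entry `0` encodes `∞`). -/
def eoddComponent (M : CoxeterMatrix B) (s : B) : Set B :=
  oddComponent M s ∪ {t | ∃ t' ∈ oddComponent M s, M t t' ≠ 0}

/-- Connectedness inside `eodd(s)` via edges of the Coxeter diagram (edges are pairs `a ≠ b`
with `m_{ab} ≠ 2`, i.e. label `≥ 3` or `∞`). -/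
def eoddConn (M : CoxeterMatrix B) (s : B) (t u : B) : Prop :=
  Relation.ReflTransGen
    (fun a b => a ∈ eoddComponent M s ∧ b ∈ eoddComponent M s ∧ a ≠ b ∧ M a b ≠ 2) t u

/-- `K_s`: the union of all spherical irreducible components of `eodd(s)` not containing `s`. -/
def sphericalPart {W : Type*} [Group W] (M : CoxeterMatrix B) (cs : CoxeterSystem M W)
    (s : B) : Set B :=
  {t ∈ eoddComponent M s | ¬ eoddConn M s t s ∧
    ((Subgroup.closure (cs.simple '' {u | eoddConn M s t u}) : Subgroup W) : Set W).Finite}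

/-!
The images `t z` of the odd generators satisfy the Coxeter relations: along an edge inside
`odd(s)` the two copies of `z` cancel, and an edge leaving `odd(s)` has an even label (an odd one
would enlarge `odd(s)`), while `z` commutes with both endpoints, since every vertex of `eodd(s)`
outside `K_s` commutes with all of `K_s`. Both need `z² = 1`, which holds for every central
element `z` of a standard parabolic subgroup: by Tits' sign representation the parity of the
number of occurrences of a reflection in the right inversion sequence of a word depends only on
the word's product, and if `z = π ω` commutes with that sequence, every reflection occurs an even
number of times in the sequence of `ω ω`, so `z²` has no right descent. Since `K_s` misses
`odd(s)`, the resulting endomorphism fixes `z`, hence squares to the identity.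
-/

theorem conj_eq_iff_eq_inv_conj {G : Type*} [Group G] (g t x : G) :
    g * t * g⁻¹ = x ↔ t = g⁻¹ * x * g := by
  constructor <;> rintro rfl <;> group

namespace CoxeterSystem

variable {W : Type*} [Group W] {M : CoxeterMatrix B} (cs : CoxeterSystem M W)

section SignRepresentation

open scoped Classical

theorem simple_conj_eq_simple_iff (i : B) (t : W) :
    cs.simple i * t * cs.simple i = cs.simple i ↔ t = cs.simple i := by
  simpa [cs.inv_simple, mul_assoc, cs.simple_mul_simple_self] using
    conj_eq_iff_eq_inv_conj (cs.simple i) t (cs.simple i)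

/-- Tits' sign representation: `s_i` acts on pairs (reflection, parity) by conjugation, flipping
the parity exactly on `s_i` itself. -/
noncomputable def signPerm (i : B) : Equiv.Perm (W × ZMod 2) :=
  Function.Involutive.toPerm
    (fun x => (cs.simple i * x.1 * cs.simple i, x.2 + if x.1 = cs.simple i then 1 else 0))
    (by
      rintro ⟨t, ε⟩
      ext
      · simp [mul_assoc, cs.simple_mul_simple_cancel_left, cs.simple_mul_simple_self]
      · simp only [cs.simple_conj_eq_simple_iff, add_assoc]
        split_ifs <;> simp [CharTwo.add_self_eq_zero])

theorem signPerm_apply (i : B) (t : W) (ε : ZMod 2) :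
    cs.signPerm i (t, ε) =
      (cs.simple i * t * cs.simple i, ε + if t = cs.simple i then 1 else 0) :=
  rfl

theorem signPerm_mul_apply (i j : B) (t : W) (ε : ZMod 2) :
    (cs.signPerm i * cs.signPerm j) (t, ε) =
      (cs.simple i * cs.simple j * t * (cs.simple i * cs.simple j)⁻¹,
        ε + (if t = cs.simple j then 1 else 0) +
          if t = cs.simple j * (cs.simple i * cs.simple j) then 1 else 0) := by
  have hconj : cs.simple j * t * cs.simple j = cs.simple i ↔
      t = cs.simple j * (cs.simple i * cs.simple j) := by
    simpa [cs.inv_simple, mul_assoc] using conj_eq_iff_eq_inv_conj (cs.simple j) t (cs.simple i)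
  rw [Equiv.Perm.mul_apply, signPerm_apply, signPerm_apply, hconj, mul_inv_rev, cs.inv_simple,
    cs.inv_simple]
  simp only [mul_assoc]

theorem signPerm_mul_pow_apply (i j : B) (k : ℕ) (t : W) (ε : ZMod 2) :
    ((cs.signPerm i * cs.signPerm j) ^ k) (t, ε) =
      ((cs.simple i * cs.simple j) ^ k * t * ((cs.simple i * cs.simple j) ^ k)⁻¹,
        ε + ∑ r ∈ Finset.range (2 * k),
          if t = cs.simple j * (cs.simple i * cs.simple j) ^ r then 1 else 0) := by
  induction k generalizing t ε with
  | zero => simp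
  | succ k ih =>
    have hshift (r : ℕ) : cs.simple i * cs.simple j * t * (cs.simple i * cs.simple j)⁻¹ =
        cs.simple j * (cs.simple i * cs.simple j) ^ r ↔
          t = cs.simple j * (cs.simple i * cs.simple j) ^ (r + 1 + 1) := by
      rw [conj_eq_iff_eq_inv_conj, pow_succ, pow_succ']
      simp only [mul_inv_rev, cs.inv_simple, mul_assoc]
    rw [pow_succ, Equiv.Perm.mul_apply, signPerm_mul_apply, ih]
    refine Prod.ext (by simp only [pow_succ, mul_inv_rev, mul_assoc]) ?_
    rw [show 2 * (k + 1) = 2 * k + 1 + 1 by ring, Finset.sum_range_succ', Finset.sum_range_succ']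
    simp only [hshift, zero_add, pow_zero, pow_one, mul_one]
    ring

theorem isLiftable_signPerm : M.IsLiftable cs.signPerm := by
  intro i j
  ext ⟨t, ε⟩ : 1
  have hperiod (r : ℕ) : (cs.simple i * cs.simple j) ^ (M i j + r) =
      (cs.simple i * cs.simple j) ^ r := by
    rw [pow_add, cs.simple_mul_simple_pow, one_mul]
  rw [signPerm_mul_pow_apply, two_mul, Finset.sum_range_add]
  simp [hperiod, cs.simple_mul_simple_pow, CharTwo.add_self_eq_zero]

noncomputable def signRep : W →* Equiv.Perm (W × ZMod 2) :=
  cs.lift ⟨cs.signPerm, cs.isLiftable_signPerm⟩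

theorem signRep_wordProd (ω : List B) (t : W) (ε : ZMod 2) :
    cs.signRep (cs.wordProd ω) (t, ε) =
      (cs.wordProd ω * t * (cs.wordProd ω)⁻¹, ε + (cs.rightInvSeq ω).count t) := by
  induction ω with
  | nil => simp [signRep]
  | cons i ω ih =>
    have hconj := conj_eq_iff_eq_inv_conj (cs.wordProd ω) t (cs.simple i)
    rw [cs.wordProd_cons, map_mul, Equiv.Perm.mul_apply, ih, signRep, cs.lift_apply_simple,
      signPerm_apply, hconj, rightInvSeq, List.count_cons]
    refine Prod.ext (by simp only [mul_inv_rev, cs.inv_simple, mul_assoc]) ?_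
    simp only [beq_iff_eq, eq_comm (a := t), Nat.cast_add, Nat.cast_ite, Nat.cast_one,
      Nat.cast_zero, add_assoc]

theorem count_rightInvSeq_eq_of_wordProd_eq {ω ω' : List B} (h : cs.wordProd ω = cs.wordProd ω')
    (t : W) : ((cs.rightInvSeq ω).count t : ZMod 2) = (cs.rightInvSeq ω').count t := by
  simpa [h, signRep_wordProd] using (congrArg Prod.snd (cs.signRep_wordProd ω t 0)).symm

theorem count_rightInvSeq_simple_of_isRightDescent {ω : List B} {i : B}
    (h : cs.IsRightDescent (cs.wordProd ω) i) :
    ((cs.rightInvSeq ω).count (cs.simple i) : ZMod 2) = 1 := by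
  obtain ⟨ω', hω', hprod⟩ := cs.exists_isReduced (cs.wordProd ω * cs.simple i)
  have hconcat : cs.wordProd (ω'.concat i) = cs.wordProd ω := by
    rw [cs.wordProd_concat, ← hprod, cs.simple_mul_simple_cancel_right]
  have hred : cs.IsReduced (ω'.concat i) := by
    have := cs.isRightDescent_iff.mp h
    rw [hprod, hω'.eq] at this
    rw [IsReduced, hconcat, List.length_concat, ← this]
  have hmem : cs.simple i ∈ cs.rightInvSeq (ω'.concat i) := by
    rw [rightInvSeq_concat]; simp
  rw [cs.count_rightInvSeq_eq_of_wordProd_eq hconcat.symm,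
    List.count_eq_one_of_mem hred.nodup_rightInvSeq hmem, Nat.cast_one]

theorem rightInvSeq_append (ω ω' : List B) :
    cs.rightInvSeq (ω ++ ω') =
      (cs.rightInvSeq ω).map (fun t => (cs.wordProd ω')⁻¹ * t * cs.wordProd ω') ++
        cs.rightInvSeq ω' := by
  induction ω with
  | nil => simp
  | cons i ω ih =>
    simp only [List.cons_append, rightInvSeq, ih, List.map_cons, cs.wordProd_append, mul_inv_rev,
      mul_assoc]

theorem wordProd_mul_self_eq_one_of_commute_rightInvSeq {ω : List B}
    (h : ∀ t ∈ cs.rightInvSeq ω, Commute (cs.wordProd ω) t) :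
    cs.wordProd ω * cs.wordProd ω = 1 := by
  by_contra hne
  obtain ⟨i, hi⟩ := cs.exists_rightDescent_of_ne_one hne
  have hdouble : cs.rightInvSeq (ω ++ ω) = cs.rightInvSeq ω ++ cs.rightInvSeq ω := by
    rw [rightInvSeq_append, List.map_congr_left (g := id) fun t ht => (h t ht).inv_mul_cancel,
      List.map_id]
  have hodd := cs.count_rightInvSeq_simple_of_isRightDescent (ω := ω ++ ω)
    (by rwa [cs.wordProd_append])
  rw [hdouble, List.count_append, Nat.cast_add, CharTwo.add_self_eq_zero] at hodd
  exact zero_ne_one hodd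

end SignRepresentation

theorem wordProd_mem_closure {X : Set B} {ω : List B} (h : ∀ i ∈ ω, i ∈ X) :
    cs.wordProd ω ∈ Subgroup.closure (cs.simple '' X) := by
  induction ω with
  | nil => exact one_mem _
  | cons i ω ih =>
    rw [cs.wordProd_cons]
    exact mul_mem (Subgroup.subset_closure ⟨i, h i List.mem_cons_self, rfl⟩)
      (ih fun j hj => h j (List.mem_cons_of_mem i hj))

theorem rightInvSeq_mem_closure {X : Set B} {ω : List B} (h : ∀ i ∈ ω, i ∈ X) :
    ∀ t ∈ cs.rightInvSeq ω, t ∈ Subgroup.closure (cs.simple '' X) := by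
  induction ω with
  | nil => simp
  | cons i ω ih =>
    have hω : ∀ j ∈ ω, j ∈ X := fun j hj => h j (List.mem_cons_of_mem i hj)
    rintro t (_ | ⟨_, ht⟩)
    · have hπ := cs.wordProd_mem_closure hω
      exact mul_mem (mul_mem (inv_mem hπ)
        (Subgroup.subset_closure ⟨i, h i List.mem_cons_self, rfl⟩)) hπ
    · exact ih hω t ht

theorem exists_wordProd_eq_of_mem_closure {X : Set B} {w : W}
    (h : w ∈ Subgroup.closure (cs.simple '' X)) :
    ∃ ω : List B, (∀ i ∈ ω, i ∈ X) ∧ cs.wordProd ω = w := by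
  induction h using Subgroup.closure_induction with
  | mem _ hx =>
    obtain ⟨i, hi, rfl⟩ := hx
    exact ⟨[i], by simpa using hi, cs.wordProd_singleton i⟩
  | one => exact ⟨[], by simp, cs.wordProd_nil⟩
  | mul _ _ _ _ hx hy =>
    obtain ⟨ω₁, h₁, rfl⟩ := hx
    obtain ⟨ω₂, h₂, rfl⟩ := hy
    exact ⟨ω₁ ++ ω₂, fun i hi => (List.mem_append.mp hi).elim (h₁ i) (h₂ i),
      cs.wordProd_append ω₁ ω₂⟩
  | inv _ _ hx =>
    obtain ⟨ω, hω, rfl⟩ := hx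
    exact ⟨ω.reverse, fun i hi => hω i (List.mem_reverse.mp hi), cs.wordProd_reverse ω⟩

theorem mul_self_eq_one_of_mem_closure_of_commute {X : Set B} {z : W}
    (hz : z ∈ Subgroup.closure (cs.simple '' X))
    (hzc : ∀ x ∈ Subgroup.closure (cs.simple '' X), Commute z x) : z * z = 1 := by
  obtain ⟨ω, hωX, rfl⟩ := cs.exists_wordProd_eq_of_mem_closure hz
  exact cs.wordProd_mul_self_eq_one_of_commute_rightInvSeq fun t ht =>
    hzc t (cs.rightInvSeq_mem_closure hωX t ht)

theorem commute_simple_of_eq_two {i j : B} (h : M i j = 2) :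
    Commute (cs.simple i) (cs.simple j) := by
  have hsq := cs.simple_mul_simple_pow i j
  rw [h, pow_two, mul_eq_one_iff_eq_inv, mul_inv_rev, cs.inv_simple, cs.inv_simple] at hsq
  exact hsq

end CoxeterSystem

section Transvection

variable {W : Type*} [Group W] {M : CoxeterMatrix B} {s : B}

theorem oddComponent_subset_eoddComponent : oddComponent M s ⊆ eoddComponent M s :=
  Set.subset_union_left

theorem eoddConn_symm {t u : B} (h : eoddConn M s t u) : eoddConn M s u t := by
  induction h with
  | refl => exact Relation.ReflTransGen.refl
  | tail _ hab ih =>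
    obtain ⟨ha, hb, hne, h2⟩ := hab
    exact ih.head ⟨hb, ha, hne.symm, by rwa [M.symmetric]⟩

theorem eoddConn_of_mem_oddComponent {t : B} (h : t ∈ oddComponent M s) : eoddConn M s s t := by
  induction h with
  | refl => exact Relation.ReflTransGen.refl
  | tail hsa hab ih =>
    obtain ⟨hne, hodd⟩ := hab
    refine ih.tail ⟨oddComponent_subset_eoddComponent hsa,
      oddComponent_subset_eoddComponent (hsa.tail ⟨hne, hodd⟩), hne, fun h2 => ?_⟩
    rw [h2] at hodd
    exact Nat.not_odd_iff_even.mpr even_two hodd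

theorem even_of_mem_oddComponent_of_notMem {a b : B} (ha : a ∈ oddComponent M s)
    (hb : b ∉ oddComponent M s) : Even (M a b) :=
  Nat.not_odd_iff_even.mp fun hodd => hb (ha.tail ⟨fun hab => hb (hab ▸ ha), hodd⟩)

theorem notMem_oddComponent_of_mem_sphericalPart (cs : CoxeterSystem M W) {u : B}
    (hu : u ∈ sphericalPart M cs s) : u ∉ oddComponent M s :=
  fun hodd => hu.2.1 (eoddConn_symm (eoddConn_of_mem_oddComponent hodd))

theorem eq_two_of_mem_sphericalPart_of_notMem (cs : CoxeterSystem M W) {u b : B}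
    (hu : u ∈ sphericalPart M cs s) (hb : b ∈ eoddComponent M s)
    (hbK : b ∉ sphericalPart M cs s) : M u b = 2 := by
  by_contra hne
  have hub : eoddConn M s u b :=
    Relation.ReflTransGen.single ⟨hu.1, hb, fun h => hbK (h ▸ hu), hne⟩
  have hcomp : {v | eoddConn M s b v} = {v | eoddConn M s u v} :=
    Set.ext fun v => ⟨hub.trans, (eoddConn_symm hub).trans⟩
  exact hbK ⟨hb, fun hbs => hu.2.1 (hub.trans hbs), hcomp ▸ hu.2.2⟩

theorem commute_simple_of_mem_eoddComponent (cs : CoxeterSystem M W) {z : W}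
    (hz : z ∈ Subgroup.closure (cs.simple '' sphericalPart M cs s))
    (hzc : ∀ x ∈ Subgroup.closure (cs.simple '' sphericalPart M cs s), Commute z x)
    {b : B} (hb : b ∈ eoddComponent M s) : Commute z (cs.simple b) := by
  by_cases hbK : b ∈ sphericalPart M cs s
  · exact hzc _ (Subgroup.subset_closure ⟨b, hbK, rfl⟩)
  · have hK : Subgroup.closure (cs.simple '' sphericalPart M cs s) ≤
        Subgroup.centralizer {cs.simple b} := by
      rw [Subgroup.closure_le]
      rintro _ ⟨u, hu, rfl⟩
      exact Subgroup.mem_centralizer_singleton_iff.mpr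
        (cs.commute_simple_of_eq_two (eq_two_of_mem_sphericalPart_of_notMem cs hu hb hbK)).eq
    exact Subgroup.mem_centralizer_singleton_iff.mp (hK hz)

open scoped Classical in
noncomputable def CoxeterSystem.twistedSimple (cs : CoxeterSystem M W) (s : B) (z : W) (t : B) :
    W :=
  if t ∈ oddComponent M s then cs.simple t * z else cs.simple t

theorem CoxeterSystem.twistedSimple_of_mem (cs : CoxeterSystem M W) {z : W} {t : B}
    (ht : t ∈ oddComponent M s) : cs.twistedSimple s z t = cs.simple t * z :=
  if_pos ht

theorem CoxeterSystem.twistedSimple_of_notMem (cs : CoxeterSystem M W) {z : W} {t : B}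
    (ht : t ∉ oddComponent M s) : cs.twistedSimple s z t = cs.simple t :=
  if_neg ht

theorem CoxeterSystem.isLiftable_twistedSimple (cs : CoxeterSystem M W) {z : W} (hz2 : z * z = 1)
    (hcomm : ∀ b ∈ eoddComponent M s, Commute z (cs.simple b)) :
    M.IsLiftable (cs.twistedSimple s z) := by
  have hpow {a b : B} (ha : a ∈ eoddComponent M s) (hb : b ∈ eoddComponent M s)
      (hab : Even (M a b)) : (cs.simple a * cs.simple b * z) ^ M a b = 1 := by
    obtain ⟨k, hk⟩ := hab
    rw [((hcomm a ha).symm.mul_left (hcomm b hb).symm).mul_pow, cs.simple_mul_simple_pow,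
      one_mul, hk, ← two_mul, pow_mul, pow_two, hz2, one_pow]
  intro a b
  by_cases ha : a ∈ oddComponent M s <;> by_cases hb : b ∈ oddComponent M s <;>
    simp only [CoxeterSystem.twistedSimple, ha, hb, if_true, if_false]
  · rw [mul_assoc, ← mul_assoc z, (hcomm b (oddComponent_subset_eoddComponent hb)).eq,
      mul_assoc (cs.simple b), hz2, mul_one]
    exact cs.simple_mul_simple_pow a b
  · rcases eq_or_ne (M a b) 0 with h0 | h0
    · rw [h0, pow_zero]
    have hbe : b ∈ eoddComponent M s := Or.inr ⟨a, ha, by rwa [M.symmetric]⟩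
    rw [mul_assoc, (hcomm b hbe).eq, ← mul_assoc]
    exact hpow (oddComponent_subset_eoddComponent ha) hbe
      (even_of_mem_oddComponent_of_notMem ha hb)
  · rcases eq_or_ne (M a b) 0 with h0 | h0
    · rw [h0, pow_zero]
    rw [← mul_assoc]
    exact hpow (Or.inr ⟨b, hb, h0⟩) (oddComponent_subset_eoddComponent hb)
      (M.symmetric a b ▸ even_of_mem_oddComponent_of_notMem hb ha)
  · exact cs.simple_mul_simple_pow a b

end Transvection

/-- Let `(W, S)` be a Coxeter system, `s ∈ S`, and let `z` be a central element
of `⟨K_s⟩`, where `K_s` is the union of the spherical irreducible components of `eodd(s)` not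
containing `s`.  Then the map `θ_{s,z}` sending `t ↦ t z` for `t ∈ odd(s)` and fixing the
other simple reflections extends to an involutory automorphism of `W` (an `s`-transvection). -/
theorem coxeter_transvection_extends_to_involutory_automorphism
    {W : Type*} [Group W] {M : CoxeterMatrix B} (cs : CoxeterSystem M W) (s : B) (z : W)
    (hz : z ∈ Subgroup.closure (cs.simple '' sphericalPart M cs s))
    (hzc : ∀ x ∈ Subgroup.closure (cs.simple '' sphericalPart M cs s), z * x = x * z) :
    ∃ φ : W ≃* W,
      (∀ t ∈ oddComponent M s, φ (cs.simple t) = cs.simple t * z) ∧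
      (∀ t : B, t ∉ oddComponent M s → φ (cs.simple t) = cs.simple t) ∧
      (∀ w : W, φ (φ w) = w) := by
  have hz2 : z * z = 1 := cs.mul_self_eq_one_of_mem_closure_of_commute hz hzc
  have hlift := cs.isLiftable_twistedSimple hz2 fun b =>
    commute_simple_of_mem_eoddComponent cs hz hzc
  set φ := cs.lift ⟨_, hlift⟩
  have hφ_odd (t : B) (ht : t ∈ oddComponent M s) : φ (cs.simple t) = cs.simple t * z := by
    rw [cs.lift_apply_simple hlift, cs.twistedSimple_of_mem ht]
  have hφ_notOdd (t : B) (ht : t ∉ oddComponent M s) : φ (cs.simple t) = cs.simple t := by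
    rw [cs.lift_apply_simple hlift, cs.twistedSimple_of_notMem ht]
  have hφz : φ z = z := by
    refine MonoidHom.eqOn_closure (g := MonoidHom.id W) ?_ hz
    rintro _ ⟨u, hu, rfl⟩
    exact hφ_notOdd u (notMem_oddComponent_of_mem_sphericalPart cs hu)
  have hinv : φ.comp φ = MonoidHom.id W := cs.ext_simple fun t => by
    by_cases ht : t ∈ oddComponent M s
    · simp [hφ_odd t ht, hφz, mul_assoc, hz2]
    · simp [hφ_notOdd t ht]
  exact ⟨φ.toMulEquiv φ hinv hinv, hφ_odd, hφ_notOdd, DFunLike.congr_fun hinv⟩
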